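/- arXiv:2506.20127 — 3 statements merged into one kernel-verified Lean document; each statement's English description precedes it below -/
import Mathlib

section
/- Let σ be a trace of length n over threads T (a well-formed sequence of read/write/acquire/release events), and suppose e_i and e_j (i < j) are events of σ. Then e_i happens-before e_j in σ if and only if e_i happens-before e_j in the sub-trace σ[i..j] consisting of events at positions i through j. -/
/-- Operations of a concurrent trace: read/write of a memory location, or
acquire/release of a lock. -/
inductive Op (L X : Type*) where
  | read (x : X)
  | write (x : X)
  | acq (l : L)
  | rel (l : L)

/-- An event of a trace: a thread identifier together with an operation. -/
structure Event (T L X : Type*) where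
  thread : T
  op : Op L X

/-- The base (one-step) happens-before relation on positions of a trace:
`i` comes before `j` and either the events share a thread, or position `i`
releases a lock that position `j` acquires. -/
def hbBase {T L X : Type*} (σ : List (Event T L X)) (i j : ℕ) : Prop :=
  i < j ∧ j < σ.length ∧
    ∃ e e', σ[i]? = some e ∧ σ[j]? = some e' ∧
      (e.thread = e'.thread ∨ ∃ l, e.op = Op.rel l ∧ e'.op = Op.acq l)

/-- Happens-before: the transitive closure of the base relation. -/
def hb {T L X : Type*} (σ : List (Event T L X)) : ℕ → ℕ → Prop :=
  Relation.TransGen (hbBase σ)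

/-- A trace is well formed if every release is preceded by a matching acquire by the
same thread, with no intervening operations on that lock. -/
def WellFormed {T L X : Type*} (σ : List (Event T L X)) : Prop :=
  ∀ (j : ℕ) (e : Event T L X) (t : T) (l : L), σ[j]? = some e → e.thread = t → e.op = Op.rel l →
    ∃ i < j, ∃ e' : Event T L X, σ[i]? = some e' ∧ e'.thread = t ∧ e'.op = Op.acq l ∧
      ∀ k, i < k → k < j → ∀ e'' : Event T L X, σ[k]? = some e'' →
        e''.op ≠ Op.acq l ∧ e''.op ≠ Op.rel l

/-- The `context-free' property of happens-before: for positions `i < j` of a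
well-formed trace `σ`, `e_i` happens-before `e_j` in `σ` iff it does so in the
sub-trace of `σ` consisting of the events at positions `i` through `j`. -/
theorem hb_context_free {T L X : Type*} (σ : List (Event T L X))
    (hwf : WellFormed σ) (i j : ℕ) (hij : i < j) (hj : j < σ.length) :
    hb σ i j ↔ hb ((σ.drop i).take (j - i + 1)) 0 (j - i) := by
  set τ := (σ.drop i).take (j - i + 1) with hτ
  have hlen : τ.length = j - i + 1 := by
    simp [hτ, List.length_take, List.length_drop]; omega
  have hget : ∀ q, q ≤ j - i → τ[q]? = σ[i + q]? := by
    intro q hq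
    rw [hτ, List.getElem?_take, if_pos (by omega), List.getElem?_drop]
  have hbase : ∀ p q, p < q → q ≤ j - i →
      (hbBase σ (i + p) (i + q) ↔ hbBase τ p q) := by
    intro p q hpq hq
    unfold hbBase
    rw [hget p (by omega), hget q hq, hlen]
    constructor
    · rintro ⟨_, _, h⟩; exact ⟨hpq, by omega, h⟩
    · rintro ⟨_, _, h⟩; exact ⟨by omega, by omega, h⟩
  have hmono : ∀ (ρ : List (Event T L X)) a b, hb ρ a b → a < b := by
    intro ρ a b h
    induction h with
    | single h => exact h.1
    | tail _ h2 ih => exact lt_trans ih h2.1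
  have fwd : ∀ a b, hb σ a b → i ≤ a → b ≤ j → hb τ (a - i) (b - i) := by
    intro a b h
    induction h with
    | @single d h =>
      intro ha hd
      have had : a < d := h.1
      apply Relation.TransGen.single
      rw [← hbase (a - i) (d - i) (by omega) (by omega)]
      have e1 : i + (a - i) = a := by omega
      have e2 : i + (d - i) = d := by omega
      rw [e1, e2]; exact h
    | @tail c d h1 h2 ih =>
      intro ha hd
      have hac := hmono σ a c h1
      have hcd := h2.1
      refine (ih ha (by omega)).tail ?_
      rw [← hbase (c - i) (d - i) (by omega) (by omega)]
      have e1 : i + (c - i) = c := by omega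
      have e2 : i + (d - i) = d := by omega
      rw [e1, e2]; exact h2
  have bwd : ∀ p q, hb τ p q → q ≤ j - i → hb σ (i + p) (i + q) := by
    intro p q h
    induction h with
    | @single d h =>
      intro hd
      exact Relation.TransGen.single ((hbase p d h.1 hd).mpr h)
    | @tail c d h1 h2 ih =>
      intro hd
      have hcd := h2.1
      refine (ih (by omega)).tail ?_
      exact (hbase c d hcd hd).mpr h2
  constructor
  · intro h
    have := fwd i j h le_rfl le_rfl
    simpa using this
  · intro h
    have := bwd 0 (j - i) h le_rfl
    have e : i + (j - i) = j := by omega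
    simpa [e] using this
end

section
/- Let σ₁ and σ₂ be well-formed sub-traces over a set of threads T, such that at most h locks are held at the end of σ₁ and at most h locks are held at the beginning of σ₂. Then there exists a sequence of events μ, containing only acquire and release events, with |μ| ≤ 4|T| + 2h, such that the concatenation σ₁ ++ μ ++ σ₂ is well-formed and every event of σ₁ happens-before every event of σ₂ in the concatenation. -/
/-- A well-formed sub-trace: a contiguous slice of some well-formed trace. -/
def WellFormedSub {T L X : Type*} (η : List (Event T L X)) : Prop :=
  ∃ σ i j, WellFormed σ ∧ η = (σ.drop i).take (j - i)

/-- Lock `l` is held at the end of a sub-trace: some acquire of `l` has no later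
release of `l`. -/
def heldAtEnd {T L X : Type*} (σ : List (Event T L X)) (l : L) : Prop :=
  ∃ (i : ℕ) (e : Event T L X), σ[i]? = some e ∧ e.op = Op.acq l ∧
    ∀ (k : ℕ) (e' : Event T L X), i < k → σ[k]? = some e' → e'.op ≠ Op.rel l

/-- Lock `l` is held at the beginning of a sub-trace: some release of `l` has no
earlier acquire of `l`. -/
def heldAtStart {T L X : Type*} (σ : List (Event T L X)) (l : L) : Prop :=
  ∃ (i : ℕ) (e : Event T L X), σ[i]? = some e ∧ e.op = Op.rel l ∧
    ∀ (k : ℕ) (e' : Event T L X), k < i → σ[k]? = some e' → e'.op ≠ Op.acq l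


namespace GlueAux

variable {T L X : Type*}

/-- index transfer for slices -/
lemma sub_get {η σ : List (Event T L X)} {a c : ℕ} (hη : η = (σ.drop a).take c)
    {m : ℕ} (hm : m < η.length) : η[m]? = σ[a + m]? := by
  subst hη
  have hc : m < c := by simp [List.length_take] at hm; omega
  simp [List.getElem?_take, hc, List.getElem?_drop]

lemma wf_take {σ : List (Event T L X)} (hσ : WellFormed σ) (m : ℕ) :
    WellFormed (σ.take m) := by
  intro j e t l hj ht hl
  have hjlen : j < (σ.take m).length := (List.getElem?_eq_some_iff.mp hj).1
  have hjm : j < m := by simp [List.length_take] at hjlen; omega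
  have hj' : σ[j]? = some e := by
    rw [List.getElem?_take] at hj; simpa [hjm] using hj
  obtain ⟨i, hij, e', hi, hti, hoi, hint⟩ := hσ j e t l hj' ht hl
  refine ⟨i, hij, e', ?_, hti, hoi, ?_⟩
  · rw [List.getElem?_take]; simpa [show i < m by omega] using hi
  · intro k hik hkj e'' hk
    have hk' : σ[k]? = some e'' := by
      rw [List.getElem?_take] at hk; simpa [show k < m by omega] using hk
    exact hint k hik hkj e'' hk'

lemma exists_lastAcq {σ₁ : List (Event T L X)} {l : L} (h : heldAtEnd σ₁ l) :
    ∃ (w : ℕ) (e : Event T L X), σ₁[w]? = some e ∧ e.op = Op.acq l ∧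
      ∀ (k : ℕ) (e' : Event T L X), w < k → σ₁[k]? = some e' →
        e'.op ≠ Op.acq l ∧ e'.op ≠ Op.rel l := by
  obtain ⟨i₀, e₀, hi₀, hop₀, hrel₀⟩ := h
  set S : Set ℕ := {k | ∃ e, σ₁[k]? = some e ∧ e.op = Op.acq l} with hS
  have hfin : S.Finite := by
    apply (Set.finite_Iio σ₁.length).subset
    rintro k ⟨e, hk, -⟩
    exact (List.getElem?_eq_some_iff.mp hk).1
  have hne : S.Nonempty := ⟨i₀, e₀, hi₀, hop₀⟩
  obtain ⟨w, hwS, hmax⟩ : ∃ w ∈ S, ∀ a ∈ S, id w ≤ id a → id w = id a := by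
    obtain ⟨w, hw, hm⟩ := Set.Finite.exists_maximalFor id S hfin hne
    exact ⟨w, hw, fun a ha hle => le_antisymm hle (hm ha hle)⟩
  obtain ⟨ew, hw, hopw⟩ := hwS
  have hwi₀ : i₀ ≤ w := by
    by_contra hlt
    have := hmax i₀ ⟨e₀, hi₀, hop₀⟩ (by simp only [id]; omega)
    simp only [id] at this; omega
  refine ⟨w, ew, hw, hopw, ?_⟩
  intro k e' hwk hk
  constructor
  · intro hacq
    have hkS : k ∈ S := ⟨e', hk, hacq⟩
    have := hmax k hkS (by simp only [id]; omega)
    simp only [id] at this; omega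
  · intro hrel
    rcases Nat.lt_or_ge i₀ k with hik | hik
    · exact (hrel₀ k e' hik hk) hrel
    · omega

lemma start_rel_eq {σ₂ : List (Event T L X)} (hwf : WellFormedSub σ₂) {k w : ℕ}
    {e ew : Event T L X} {l : L}
    (hk : σ₂[k]? = some e) (hek : e.op = Op.rel l)
    (hstrong : ∀ m e', m < k → σ₂[m]? = some e' → e'.op ≠ Op.acq l ∧ e'.op ≠ Op.rel l)
    (hw : σ₂[w]? = some ew) (hew : ew.op = Op.rel l)
    (hweak : ∀ m e', m < w → σ₂[m]? = some e' → e'.op ≠ Op.acq l) : k = w := by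
  rcases Nat.lt_trichotomy k w with hkw | hkw | hkw
  · -- k < w : use well-formedness of the ambient trace
    obtain ⟨τ, a, c, hτ, hτeq⟩ := hwf
    have hwlen : w < σ₂.length := (List.getElem?_eq_some_iff.mp hw).1
    have hklen : k < σ₂.length := (List.getElem?_eq_some_iff.mp hk).1
    have hwτ : τ[a + w]? = some ew := by rw [← sub_get hτeq hwlen]; exact hw
    obtain ⟨p, hpw, ea, hpτ, -, hopa, hint⟩ := hτ (a + w) ew ew.thread l hwτ rfl hew
    have hpa : a + k ≤ p := by
      by_contra hlt
      have hkτ : τ[a + k]? = some e := by rw [← sub_get hτeq hklen]; exact hk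
      exact (hint (a + k) (by omega) (by omega) e hkτ).2 hek
    have hplt : p - a < σ₂.length := by omega
    have hpσ₂ : σ₂[p - a]? = some ea := by
      rw [sub_get hτeq hplt, show a + (p - a) = p by omega]; exact hpτ
    exact absurd hopa (hweak (p - a) ea (by omega) hpσ₂)
  · exact hkw
  · exact absurd hew (hstrong w ew hkw hw).2

lemma finite_heldAtEnd (σ₁ : List (Event T L X)) : {l | heldAtEnd σ₁ l}.Finite := by
  have : {l | heldAtEnd σ₁ l} ⊆ ⋃ e ∈ σ₁, {l | e.op = Op.acq l} := by
    rintro l ⟨i, e, hi, hop, -⟩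
    exact Set.mem_biUnion (List.mem_of_getElem? hi) hop
  refine Set.Finite.subset ?_ this
  refine Set.Finite.biUnion σ₁.finite_toSet ?_
  intro e _
  apply Set.Subsingleton.finite
  rintro l₁ h₁ l₂ h₂
  simp only [Set.mem_setOf_eq] at h₁ h₂
  rw [h₁] at h₂; exact Op.acq.inj h₂

lemma finite_heldAtStart (σ₂ : List (Event T L X)) : {l | heldAtStart σ₂ l}.Finite := by
  have : {l | heldAtStart σ₂ l} ⊆ ⋃ e ∈ σ₂, {l | e.op = Op.rel l} := by
    rintro l ⟨i, e, hi, hop, -⟩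
    exact Set.mem_biUnion (List.mem_of_getElem? hi) hop
  refine Set.Finite.subset ?_ this
  refine Set.Finite.biUnion σ₂.finite_toSet ?_
  intro e _
  apply Set.Subsingleton.finite
  rintro l₁ h₁ l₂ h₂
  simp only [Set.mem_setOf_eq] at h₁ h₂
  rw [h₁] at h₂; exact Op.rel.inj h₂

lemma exists_prefix {σ₁ : List (Event T L X)} (hwf₁ : WellFormedSub σ₁) :
    ∃ (P : List (Event T L X)) (d : ℕ), WellFormed P ∧ d ≤ P.length ∧ P.drop d = σ₁ := by
  obtain ⟨σ₀, i, j, hσ₀, heq⟩ := hwf₁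
  set d := min i σ₀.length with hd
  refine ⟨σ₀.take (d + σ₁.length), d, wf_take hσ₀ _, ?_, ?_⟩
  · simp [List.length_take]; omega
  · rw [List.drop_take, Nat.add_sub_cancel_left]
    have hdd : σ₀.drop d = σ₀.drop i := by
      rcases le_total i σ₀.length with hle | hle
      · simp [hd, min_eq_left hle]
      · rw [List.drop_eq_nil_of_le hle, List.drop_eq_nil_of_le (by omega)]
    rw [hdd]
    have hlen : σ₁.length ≤ j - i := by
      rw [heq]; simp [List.length_take]
    calc (σ₀.drop i).take σ₁.length
        = ((σ₀.drop i).take (j - i)).take σ₁.length := by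
          rw [List.take_take, min_eq_left hlen]
      _ = σ₁.take σ₁.length := by rw [← heq]
      _ = σ₁ := List.take_length


def pairG (l₀ : L) : List T → List (Event T L X)
  | [] => []
  | t :: ts => ⟨t, Op.acq l₀⟩ :: ⟨t, Op.rel l₀⟩ :: pairG l₀ ts

@[simp] lemma pairG_length (l₀ : L) (ts : List T) :
    (pairG (X := X) l₀ ts).length = 2 * ts.length := by
  induction ts with
  | nil => rfl
  | cons t ts ih => simp [pairG, ih]; omega

lemma pairG_append (l₀ : L) (ts₁ ts₂ : List T) :
    pairG (X := X) l₀ (ts₁ ++ ts₂) = pairG l₀ ts₁ ++ pairG l₀ ts₂ := by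
  induction ts₁ with
  | nil => rfl
  | cons t ts ih => simp [pairG, ih]

lemma pairG_mem (l₀ : L) (ts : List T) :
    ∀ e ∈ pairG (X := X) l₀ ts, e.op = Op.acq l₀ ∨ e.op = Op.rel l₀ := by
  induction ts with
  | nil => simp [pairG]
  | cons t ts ih =>
    intro e he
    simp only [pairG, List.mem_cons] at he
    rcases he with rfl | rfl | he
    · exact Or.inl rfl
    · exact Or.inr rfl
    · exact ih e he

lemma pairG_mem_acq {l₀ : L} {t : T} {ts : List T} (ht : t ∈ ts) :
    ∃ m, m < (pairG (X := X) l₀ ts).length ∧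
      (pairG (X := X) l₀ ts)[m]? = some ⟨t, Op.acq l₀⟩ := by
  induction ts with
  | nil => simp at ht
  | cons t' ts ih =>
    rcases List.mem_cons.mp ht with rfl | ht'
    · exact ⟨0, by simp [pairG], by simp [pairG]⟩
    · obtain ⟨m, hm, hget⟩ := ih ht'
      refine ⟨m + 2, by simp [pairG] at hm ⊢; omega, ?_⟩
      simpa [pairG] using hget

lemma pairG_chain (l₀ : L) (ts : List T) (m : ℕ)
    (hm : m + 1 < (pairG (X := X) l₀ ts).length) :
    ∃ e e', (pairG (X := X) l₀ ts)[m]? = some e ∧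
      (pairG (X := X) l₀ ts)[m+1]? = some e' ∧
      (e.thread = e'.thread ∨ (e.op = Op.rel l₀ ∧ e'.op = Op.acq l₀)) := by
  induction ts generalizing m with
  | nil => simp [pairG] at hm
  | cons t ts ih =>
    match m with
    | 0 => exact ⟨⟨t, Op.acq l₀⟩, ⟨t, Op.rel l₀⟩, by simp [pairG], by simp [pairG], Or.inl rfl⟩
    | 1 =>
      match ts with
      | [] => simp [pairG] at hm
      | t' :: ts' =>
        exact ⟨⟨t, Op.rel l₀⟩, ⟨t', Op.acq l₀⟩, by simp [pairG], by simp [pairG],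
          Or.inr ⟨rfl, rfl⟩⟩
    | (k + 2) =>
      have hk : k + 1 < (pairG (X := X) l₀ ts).length := by
        simp [pairG] at hm ⊢; omega
      obtain ⟨e, e', h1, h2, h3⟩ := ih k hk
      exact ⟨e, e', by simpa [pairG] using h1, by simpa [pairG] using h2, h3⟩

lemma pairG_rel (l₀ : L) (ts : List T) (m : ℕ) (e : Event T L X) (l : L)
    (hget : (pairG (X := X) l₀ ts)[m]? = some e) (hop : e.op = Op.rel l) :
    l = l₀ ∧ ∃ m', m = m' + 1 ∧
      (pairG (X := X) l₀ ts)[m']? = some ⟨e.thread, Op.acq l₀⟩ := by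
  induction ts generalizing m with
  | nil => simp [pairG] at hget
  | cons t ts ih =>
    match m with
    | 0 =>
      simp [pairG] at hget
      rw [← hget] at hop
      simp at hop
    | 1 =>
      simp [pairG] at hget
      rw [← hget] at hop
      simp at hop
      exact ⟨hop.symm, 0, rfl, by simp [pairG, ← hget]⟩
    | (k + 2) =>
      have hget' : (pairG (X := X) l₀ ts)[k]? = some e := by simpa [pairG] using hget
      obtain ⟨hl, m', hm', hacq⟩ := ih k hget'
      exact ⟨hl, m' + 2, by omega, by simpa [pairG] using hacq⟩

end GlueAux

/-- For well-formed sub-traces `σ₁` and `σ₂` with at most `h` locks held at the end of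
`σ₁` and at the beginning of `σ₂`, there is a gluing sequence `μ` of acquire/release
events with `|μ| ≤ 4|T| + 2h` such that `σ₁ ++ μ ++ σ₂` is a well-formed sub-trace in
which every event of `σ₁` happens-before every event of `σ₂`. -/
theorem exists_glue_subtrace {T L X : Type*} [Fintype T] [Nonempty L]
    (σ₁ σ₂ : List (Event T L X)) (h : ℕ)
    (hwf₁ : WellFormedSub σ₁) (hwf₂ : WellFormedSub σ₂)
    (h₁ : {l : L | heldAtEnd σ₁ l}.ncard ≤ h)
    (h₂ : {l : L | heldAtStart σ₂ l}.ncard ≤ h) :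
    ∃ μ : List (Event T L X),
      (∀ e ∈ μ, ∃ l, e.op = Op.acq l ∨ e.op = Op.rel l) ∧
      μ.length ≤ 4 * Fintype.card T + 2 * h ∧
      WellFormedSub (σ₁ ++ μ ++ σ₂) ∧
      ∀ i j, i < σ₁.length → σ₁.length + μ.length ≤ j →
        j < (σ₁ ++ μ ++ σ₂).length → hb (σ₁ ++ μ ++ σ₂) i j := by
  classical
  by_cases hTe : IsEmpty T
  · have h1e : σ₁ = [] := List.eq_nil_iff_forall_not_mem.mpr (fun e he => hTe.elim e.thread)
    have h2e : σ₂ = [] := List.eq_nil_iff_forall_not_mem.mpr (fun e he => hTe.elim e.thread)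
    refine ⟨[], by simp, by simp, ?_, ?_⟩
    · refine ⟨[], 0, 0, ?_, by simp [h1e, h2e]⟩
      intro j e t l hj _ _
      simp at hj
    · intro i j hi
      simp [h1e] at hi
  have hT : Nonempty T := not_isEmpty_iff.mp hTe
  have hEv : Inhabited (Event T L X) := ⟨⟨Classical.arbitrary T, Op.acq (Classical.arbitrary L)⟩⟩
  obtain ⟨P, d, hPwf, hdP, hPdrop⟩ := GlueAux.exists_prefix hwf₁
  obtain ⟨τ, aτ, cτ, hτwf, hτeq⟩ := hwf₂
  have hPlen : P.length = d + σ₁.length := by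
    have := congrArg List.length hPdrop
    simp [List.length_drop] at this
    omega
  have hP1 : ∀ m, m < σ₁.length → P[d + m]? = σ₁[m]? := by
    intro m hm
    conv_rhs => rw [← hPdrop]
    rw [List.getElem?_drop]
  have hτ2 : ∀ m, m < σ₂.length → σ₂[m]? = τ[aτ + m]? := fun m hm => GlueAux.sub_get hτeq hm
  set H1 := (GlueAux.finite_heldAtEnd σ₁).toFinset with hH1
  set H2 := (GlueAux.finite_heldAtStart σ₂).toFinset with hH2
  have hH1mem : ∀ l, l ∈ H1 ↔ heldAtEnd σ₁ l := fun l => by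
    rw [hH1]; exact (GlueAux.finite_heldAtEnd σ₁).mem_toFinset
  have hH2mem : ∀ l, l ∈ H2 ↔ heldAtStart σ₂ l := fun l => by
    rw [hH2]; exact (GlueAux.finite_heldAtStart σ₂).mem_toFinset
  have hH1card : H1.card ≤ h := by
    have : {l : L | heldAtEnd σ₁ l}.ncard = H1.card := by
      rw [hH1]; exact Set.ncard_eq_toFinset_card _ (GlueAux.finite_heldAtEnd σ₁)
    omega
  have hH2card : H2.card ≤ h := by
    have : {l : L | heldAtStart σ₂ l}.ncard = H2.card := by
      rw [hH2]; exact Set.ncard_eq_toFinset_card _ (GlueAux.finite_heldAtStart σ₂)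
    omega
  have key₁ : ∀ l : L, ∃ (w : ℕ) (e : Event T L X), heldAtEnd σ₁ l →
      (σ₁[w]? = some e ∧ e.op = Op.acq l ∧ ∀ (k : ℕ) (e' : Event T L X), w < k →
        σ₁[k]? = some e' → e'.op ≠ Op.acq l ∧ e'.op ≠ Op.rel l) := by
    intro l
    by_cases hl : heldAtEnd σ₁ l
    · obtain ⟨w, e, hs⟩ := GlueAux.exists_lastAcq hl
      exact ⟨w, e, fun _ => hs⟩
    · exact ⟨0, default, fun hc => absurd hc hl⟩
  choose w₁ ev₁ spec₁ using key₁
  have key₂ : ∀ l : L, ∃ (w : ℕ) (e : Event T L X), heldAtStart σ₂ l →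
      (σ₂[w]? = some e ∧ e.op = Op.rel l ∧ ∀ (k : ℕ) (e' : Event T L X), k < w →
        σ₂[k]? = some e' → e'.op ≠ Op.acq l) := by
    intro l
    by_cases hl : heldAtStart σ₂ l
    · obtain ⟨w, e, h1, h2, h3⟩ := hl
      exact ⟨w, e, fun _ => ⟨h1, h2, h3⟩⟩
    · exact ⟨0, default, fun hc => absurd hc hl⟩
  choose w₂ ev₂ spec₂ using key₂
  set l₀ : L := Classical.arbitrary L with hl₀
  set ts : List T := (Finset.univ : Finset T).toList with hts
  set R : List (Event T L X) := H1.toList.map (fun l => ⟨(ev₁ l).thread, Op.rel l⟩) with hR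
  set G : List (Event T L X) := GlueAux.pairG l₀ (ts ++ ts) with hG
  set Q : List (Event T L X) := H2.toList.map (fun l => ⟨(ev₂ l).thread, Op.acq l⟩) with hQ
  have hRlen : R.length = H1.card := by rw [hR]; simp [Finset.length_toList]
  have hGlen : G.length = 4 * ts.length := by rw [hG]; simp; omega
  have htslen : ts.length = Fintype.card T := by rw [hts]; simp [Finset.length_toList]
  have hQlen : Q.length = H2.card := by rw [hQ]; simp [Finset.length_toList]
  have hH1nd : H1.toList.Nodup := Finset.nodup_toList H1
  have hH2nd : H2.toList.Nodup := Finset.nodup_toList H2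
  have hRelem : ∀ k, k < R.length → ∃ l', H1.toList[k]? = some l' ∧
      R[k]? = some ⟨(ev₁ l').thread, Op.rel l'⟩ ∧ l' ∈ H1 := by
    intro k hk
    have hk' : k < H1.toList.length := by rw [hR] at hk; simpa using hk
    refine ⟨H1.toList[k], List.getElem?_eq_getElem hk', ?_, ?_⟩
    · rw [hR, List.getElem?_map, List.getElem?_eq_getElem hk']; rfl
    · exact Finset.mem_toList.mp (List.getElem_mem hk')
  have hQelem : ∀ k, k < Q.length → ∃ l', H2.toList[k]? = some l' ∧
      Q[k]? = some ⟨(ev₂ l').thread, Op.acq l'⟩ ∧ l' ∈ H2 := by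
    intro k hk
    have hk' : k < H2.toList.length := by rw [hQ] at hk; simpa using hk
    refine ⟨H2.toList[k], List.getElem?_eq_getElem hk', ?_, ?_⟩
    · rw [hQ, List.getElem?_map, List.getElem?_eq_getElem hk']; rfl
    · exact Finset.mem_toList.mp (List.getElem_mem hk')
  set σ : List (Event T L X) := P ++ (R ++ (G ++ (Q ++ σ₂))) with hσ
  have hσlen : σ.length = P.length + R.length + G.length + Q.length + σ₂.length := by
    rw [hσ]; simp; omega
  have hgP : ∀ k, k < P.length → σ[k]? = P[k]? := by
    intro k hk
    rw [hσ, List.getElem?_append_left hk]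
  have hgR : ∀ k, k < R.length → σ[P.length + k]? = R[k]? := by
    intro k hk
    rw [hσ, List.getElem?_append_right (by omega),
      show P.length + k - P.length = k by omega,
      List.getElem?_append_left hk]
  have hgG : ∀ k, k < G.length → σ[P.length + R.length + k]? = G[k]? := by
    intro k hk
    rw [hσ, List.getElem?_append_right (by omega),
      show P.length + R.length + k - P.length = R.length + k by omega,
      List.getElem?_append_right (by omega),
      show R.length + k - R.length = k by omega,
      List.getElem?_append_left hk]
  have hgQ : ∀ k, k < Q.length → σ[P.length + R.length + G.length + k]? = Q[k]? := by
    intro k hk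
    rw [hσ, List.getElem?_append_right (by omega),
      show P.length + R.length + G.length + k - P.length = R.length + (G.length + k) by omega,
      List.getElem?_append_right (by omega),
      show R.length + (G.length + k) - R.length = G.length + k by omega,
      List.getElem?_append_right (by omega),
      show G.length + k - G.length = k by omega,
      List.getElem?_append_left hk]
  have hg2 : ∀ k, k < σ₂.length →
      σ[P.length + R.length + G.length + Q.length + k]? = σ₂[k]? := by
    intro k hk
    rw [hσ, List.getElem?_append_right (by omega),
      show P.length + R.length + G.length + Q.length + k - P.length
        = R.length + (G.length + (Q.length + k)) by omega,
      List.getElem?_append_right (by omega),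
      show R.length + (G.length + (Q.length + k)) - R.length = G.length + (Q.length + k) by omega,
      List.getElem?_append_right (by omega),
      show G.length + (Q.length + k) - G.length = Q.length + k by omega,
      List.getElem?_append_right (by omega),
      show Q.length + k - Q.length = k by omega]
  have hWF : WellFormed σ := by
    intro p e t l hget ht hop
    have hp : p < σ.length := (List.getElem?_eq_some_iff.mp hget).1
    rcases lt_or_ge p P.length with hc1 | hc1
    · -- the release lies in P
      have hPe : P[p]? = some e := by rw [← hgP p hc1]; exact hget
      obtain ⟨q, hqp, e', hq, ht', hop', hint⟩ := hPwf p e t l hPe ht hop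
      have hq' : q < P.length := by omega
      refine ⟨q, hqp, e', by rw [hgP q hq']; exact hq, ht', hop', ?_⟩
      intro k hqk hkp e'' hk
      exact hint k hqk hkp e'' (by rw [← hgP k (by omega)]; exact hk)
    rcases lt_or_ge p (P.length + R.length) with hc2 | hc2
    · -- the release lies in R
      have hkR : p - P.length < R.length := by omega
      obtain ⟨l', hl'get, hl'R, hl'mem⟩ := hRelem (p - P.length) hkR
      have hpe : σ[p]? = R[p - P.length]? := by
        have := hgR (p - P.length) hkR
        rwa [show P.length + (p - P.length) = p by omega] at this
      have he : e = ⟨(ev₁ l').thread, Op.rel l'⟩ := by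
        rw [hget, hl'R] at hpe; exact Option.some.inj hpe
      have hll' : l' = l := by
        rw [he] at hop; exact Op.rel.inj hop
      subst hll'
      have hheld : heldAtEnd σ₁ l' := (hH1mem l').mp hl'mem
      obtain ⟨hw1get, hw1op, hw1last⟩ := spec₁ l' hheld
      have hwlt : w₁ l' < σ₁.length := (List.getElem?_eq_some_iff.mp hw1get).1
      refine ⟨d + w₁ l', by omega, ev₁ l', ?_, ?_, hw1op, ?_⟩
      · rw [hgP _ (by omega), hP1 _ hwlt]; exact hw1get
      · rw [← ht, he]
      · intro k' hqk' hk'p e'' hk''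
        rcases lt_or_ge k' P.length with hk'P | hk'P
        · have hidx : k' - d < σ₁.length := by omega
          have hs1 : σ₁[k' - d]? = some e'' := by
            rw [← hP1 _ hidx, show d + (k' - d) = k' by omega, ← hgP k' hk'P]; exact hk''
          exact hw1last (k' - d) e'' (by omega) hs1
        · have hkR' : k' - P.length < R.length := by omega
          obtain ⟨l'', hg'', hR'', hmem''⟩ := hRelem (k' - P.length) hkR'
          have hpe' : σ[k']? = R[k' - P.length]? := by
            have := hgR (k' - P.length) hkR'
            rwa [show P.length + (k' - P.length) = k' by omega] at this
          have he'' : e'' = ⟨(ev₁ l'').thread, Op.rel l''⟩ := by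
            rw [hk'', hR''] at hpe'; exact Option.some.inj hpe'
          have hne : l'' ≠ l' := by
            intro hcon
            subst hcon
            have h1 : k' - P.length < H1.toList.length := (List.getElem?_eq_some_iff.mp hg'').1
            have h2 : p - P.length < H1.toList.length := (List.getElem?_eq_some_iff.mp hl'get).1
            have e1 : H1.toList[k' - P.length]'h1 = l'' := by
              have := List.getElem?_eq_getElem h1
              rw [this] at hg''; exact Option.some.inj hg''
            have e2 : H1.toList[p - P.length]'h2 = l'' := by
              have := List.getElem?_eq_getElem h2
              rw [this] at hl'get; exact Option.some.inj hl'get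
            have : k' - P.length = p - P.length := by
              rw [← hH1nd.getElem_inj_iff (hi := h1) (hj := h2), e1, e2]
            omega
          rw [he'']
          constructor
          · simp
          · simp [hne]
    rcases lt_or_ge p (P.length + R.length + G.length) with hc3 | hc3
    · -- the release lies in G : matched by the adjacent acquire
      have hkG : p - (P.length + R.length) < G.length := by omega
      have hpe : σ[p]? = G[p - (P.length + R.length)]? := by
        have := hgG (p - (P.length + R.length)) hkG
        rwa [show P.length + R.length + (p - (P.length + R.length)) = p by omega] at this
      have hGe : (GlueAux.pairG l₀ (ts ++ ts))[p - (P.length + R.length)]? = some e := by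
        rw [← hG, ← hpe]; exact hget
      obtain ⟨hll₀, m', hm', hacq⟩ := GlueAux.pairG_rel l₀ (ts ++ ts) _ e l hGe hop
      refine ⟨P.length + R.length + m', by omega, ⟨e.thread, Op.acq l₀⟩, ?_, ht, by rw [hll₀], ?_⟩
      · rw [hgG m' (by omega), hG]; exact hacq
      · intro k' h1k' h2k' e'' hk''
        omega
    rcases lt_or_ge p (P.length + R.length + G.length + Q.length) with hc4 | hc4
    · -- impossible : Q contains only acquires
      have hkQ : p - (P.length + R.length + G.length) < Q.length := by omega
      obtain ⟨l', hg', hQ', hmem'⟩ := hQelem _ hkQ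
      have hpe : σ[p]? = Q[p - (P.length + R.length + G.length)]? := by
        have := hgQ (p - (P.length + R.length + G.length)) hkQ
        rwa [show P.length + R.length + G.length + (p - (P.length + R.length + G.length)) = p
          by omega] at this
      have he : e = ⟨(ev₂ l').thread, Op.acq l'⟩ := by
        rw [hget, hQ'] at hpe; exact Option.some.inj hpe
      rw [he] at hop
      simp at hop
    · -- the release lies in σ₂
      have hk₂ : p - (P.length + R.length + G.length + Q.length) < σ₂.length := by omega
      set k₂ := p - (P.length + R.length + G.length + Q.length) with hk₂def
      have hpe : σ[p]? = σ₂[k₂]? := by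
        have := hg2 k₂ hk₂
        rwa [show P.length + R.length + G.length + Q.length + k₂ = p by omega] at this
      have h2e : σ₂[k₂]? = some e := by rw [← hpe]; exact hget
      have hτe : τ[aτ + k₂]? = some e := by rw [← hτ2 k₂ hk₂]; exact h2e
      obtain ⟨qτ, hqτ, ea, hqget, hqth, hqop, hqint⟩ := hτwf (aτ + k₂) e t l hτe ht hop
      rcases lt_or_ge qτ aτ with hqa | hqa
      · -- the matching acquire is outside σ₂ : l is held at the start of σ₂
        have hstrong : ∀ (m : ℕ) (e' : Event T L X), m < k₂ → σ₂[m]? = some e' →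
            e'.op ≠ Op.acq l ∧ e'.op ≠ Op.rel l := by
          intro m e' hm hme
          exact hqint (aτ + m) (by omega) (by omega) e' (by rw [← hτ2 m (by omega)]; exact hme)
        have hheld : heldAtStart σ₂ l :=
          ⟨k₂, e, h2e, hop, fun m e' hm hme => (hstrong m e' hm hme).1⟩
        have hmem : l ∈ H2 := (hH2mem l).mpr hheld
        obtain ⟨hw2get, hw2op, hw2noacq⟩ := spec₂ l hheld
        have hkw : k₂ = w₂ l := GlueAux.start_rel_eq ⟨τ, aτ, cτ, hτwf, hτeq⟩ h2e hop hstrong hw2get hw2op hw2noacq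
        have hee : e = ev₂ l := by
          rw [← hkw] at hw2get
          rw [h2e] at hw2get; exact Option.some.inj hw2get
        obtain ⟨kq, hkqlt, hkqget⟩ := List.getElem_of_mem (Finset.mem_toList.mpr hmem)
        have hkqQ : kq < Q.length := by rw [hQ]; simpa using hkqlt
        have hQk : Q[kq]? = some ⟨(ev₂ l).thread, Op.acq l⟩ := by
          rw [hQ, List.getElem?_map, List.getElem?_eq_getElem hkqlt, hkqget]; rfl
        refine ⟨P.length + R.length + G.length + kq, by omega, ⟨(ev₂ l).thread, Op.acq l⟩,
          ?_, ?_, rfl, ?_⟩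
        · rw [hgQ kq hkqQ]; exact hQk
        · rw [← ht, hee]
        · intro k' h1k' h2k' e'' hk''
          rcases lt_or_ge k' (P.length + R.length + G.length + Q.length) with hk'Q | hk'Q
          · have hidx : k' - (P.length + R.length + G.length) < Q.length := by omega
            obtain ⟨l'', hg'', hQ'', hmem''⟩ := hQelem _ hidx
            have hpe' : σ[k']? = Q[k' - (P.length + R.length + G.length)]? := by
              have := hgQ (k' - (P.length + R.length + G.length)) hidx
              rwa [show P.length + R.length + G.length +
                (k' - (P.length + R.length + G.length)) = k' by omega] at this
            have he'' : e'' = ⟨(ev₂ l'').thread, Op.acq l''⟩ := by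
              rw [hk'', hQ''] at hpe'; exact Option.some.inj hpe'
            have hne : l'' ≠ l := by
              intro hcon
              subst hcon
              have h1 : k' - (P.length + R.length + G.length) < H2.toList.length :=
                (List.getElem?_eq_some_iff.mp hg'').1
              have e1 : H2.toList[k' - (P.length + R.length + G.length)]'h1 = l'' := by
                have := List.getElem?_eq_getElem h1
                rw [this] at hg''; exact Option.some.inj hg''
              have : k' - (P.length + R.length + G.length) = kq := by
                rw [← hH2nd.getElem_inj_iff (hi := h1) (hj := hkqlt), e1, hkqget]
              omega
            rw [he'']
            constructor
            · simp [hne]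
            · simp
          · have hidx : k' - (P.length + R.length + G.length + Q.length) < σ₂.length := by
              omega
            have hs2 : σ₂[k' - (P.length + R.length + G.length + Q.length)]? = some e'' := by
              have := hg2 (k' - (P.length + R.length + G.length + Q.length)) hidx
              rw [show P.length + R.length + G.length + Q.length +
                (k' - (P.length + R.length + G.length + Q.length)) = k' by omega] at this
              rw [← this]; exact hk''
            exact hstrong _ e'' (by omega) hs2
      · -- the matching acquire lies inside σ₂
        have hqlt : qτ - aτ < σ₂.length := by omega
        have hqσ₂ : σ₂[qτ - aτ]? = some ea := by
          rw [hτ2 _ hqlt, show aτ + (qτ - aτ) = qτ by omega]; exact hqget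
        refine ⟨P.length + R.length + G.length + Q.length + (qτ - aτ), by omega, ea,
          by rw [hg2 _ hqlt]; exact hqσ₂, hqth, hqop, ?_⟩
        intro k' h1k' h2k' e'' hk''
        have hidx : k' - (P.length + R.length + G.length + Q.length) < σ₂.length := by omega
        have hs2 : σ₂[k' - (P.length + R.length + G.length + Q.length)]? = some e'' := by
          have := hg2 (k' - (P.length + R.length + G.length + Q.length)) hidx
          rw [show P.length + R.length + G.length + Q.length +
            (k' - (P.length + R.length + G.length + Q.length)) = k' by omega] at this
          rw [← this]; exact hk''
        refine hqint (aτ + (k' - (P.length + R.length + G.length + Q.length)))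
          (by omega) (by omega) e'' (by rw [← hτ2 _ hidx]; exact hs2)
  refine ⟨R ++ G ++ Q, ?_, ?_, ?_, ?_⟩
  · -- only acquires and releases
    intro e he
    simp only [List.mem_append] at he
    rcases he with (he | he) | he
    · rw [hR] at he
      obtain ⟨l', -, rfl⟩ := List.mem_map.mp he
      exact ⟨l', Or.inr rfl⟩
    · rw [hG] at he
      rcases GlueAux.pairG_mem l₀ (ts ++ ts) e he with h' | h'
      · exact ⟨l₀, Or.inl h'⟩
      · exact ⟨l₀, Or.inr h'⟩
    · rw [hQ] at he
      obtain ⟨l', -, rfl⟩ := List.mem_map.mp he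
      exact ⟨l', Or.inl rfl⟩
  · -- length bound
    have : (R ++ G ++ Q).length = R.length + G.length + Q.length := by simp; omega
    omega
  · -- well-formed sub-trace
    refine ⟨σ, d, d + σ.length, hWF, ?_⟩
    have hdrop : σ.drop d = σ₁ ++ (R ++ G ++ Q) ++ σ₂ := by
      rw [hσ, List.drop_append, hPdrop, Nat.sub_eq_zero_of_le hdP,
        List.drop_zero]
      simp [List.append_assoc]
    rw [show d + σ.length - d = σ.length by omega, hdrop]
    rw [List.take_of_length_le]
    have : (σ₁ ++ (R ++ G ++ Q) ++ σ₂).length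
        = σ₁.length + (R.length + G.length + Q.length) + σ₂.length := by simp; omega
    omega
  · -- happens-before
    intro i jj hi hj hjlen
    have hμlen : (R ++ G ++ Q).length = R.length + G.length + Q.length := by simp; omega
    set κ : List (Event T L X) := σ₁ ++ (R ++ G ++ Q) ++ σ₂ with hκ
    have hκlen : κ.length = σ₁.length + (R.length + G.length + Q.length) + σ₂.length := by
      rw [hκ]; simp; omega
    have hjκ : jj < κ.length := hjlen
    have hκ1 : ∀ m, m < σ₁.length → κ[m]? = σ₁[m]? := by
      intro m hm
      rw [hκ, List.getElem?_append_left (by simp; omega)]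
      rw [List.getElem?_append_left hm]
    have hκG : ∀ m, m < G.length → κ[σ₁.length + R.length + m]? = G[m]? := by
      intro m hm
      rw [hκ, List.getElem?_append_left (by simp; omega),
        List.getElem?_append_right (by omega)]
      rw [show σ₁.length + R.length + m - σ₁.length = R.length + m by omega,
        List.getElem?_append_left (by simp; omega),
        List.getElem?_append_right (by omega),
        show R.length + m - R.length = m by omega]
    have hstep : ∀ m, m + 1 < G.length →
        hbBase κ (σ₁.length + R.length + m) (σ₁.length + R.length + (m + 1)) := by
      intro m hm
      have hmG : m + 1 < (GlueAux.pairG (X := X) l₀ (ts ++ ts)).length := by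
        rw [← hG]; exact hm
      obtain ⟨e, e', h1, h2, h3⟩ := GlueAux.pairG_chain l₀ (ts ++ ts) m hmG
      refine ⟨by omega, by omega, e, e', ?_, ?_, ?_⟩
      · rw [hκG m (by omega), hG]; exact h1
      · rw [hκG (m + 1) hm, hG]; exact h2
      · rcases h3 with h' | h'
        · exact Or.inl h'
        · exact Or.inr ⟨l₀, h'⟩
    have hchain : ∀ m' m, m < m' → m' < G.length →
        hb κ (σ₁.length + R.length + m) (σ₁.length + R.length + m') := by
      intro m'
      induction m' with
      | zero => omega
      | succ x ih =>
        intro m hm hx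
        rcases Nat.lt_or_ge m x with h' | h'
        · exact Relation.TransGen.tail (ih m h' (by omega)) (hstep x hx)
        · have hmx : m = x := by omega
          subst hmx
          exact Relation.TransGen.single (hstep m hx)
    have hiκ : i < κ.length := by omega
    have hei : κ[i]? = some (σ₁[i]'hi) := by
      rw [hκ1 i hi]; exact List.getElem?_eq_getElem hi
    have hej : κ[jj]? = some (κ[jj]'hjκ) := List.getElem?_eq_getElem hjκ
    have htmem : ∀ u : T, u ∈ ts := by
      intro u
      rw [hts]; exact Finset.mem_toList.mpr (Finset.mem_univ u)
    obtain ⟨m₁, hm₁lt, hm₁⟩ :=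
      GlueAux.pairG_mem_acq (l₀ := l₀) (X := X) (htmem (σ₁[i]'hi).thread)
    obtain ⟨m₂', hm₂lt, hm₂⟩ :=
      GlueAux.pairG_mem_acq (l₀ := l₀) (X := X) (htmem (κ[jj]'hjκ).thread)
    have hGsplit : G = GlueAux.pairG l₀ ts ++ GlueAux.pairG l₀ ts := by
      rw [hG, GlueAux.pairG_append]
    have hGm₁ : G[m₁]? = some ⟨(σ₁[i]'hi).thread, Op.acq l₀⟩ := by
      rw [hGsplit, List.getElem?_append_left hm₁lt]; exact hm₁
    have hGm₂ : G[(GlueAux.pairG (X := X) l₀ ts).length + m₂']?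
        = some ⟨(κ[jj]'hjκ).thread, Op.acq l₀⟩ := by
      rw [hGsplit, List.getElem?_append_right (by omega),
        show (GlueAux.pairG (X := X) l₀ ts).length + m₂'
          - (GlueAux.pairG (X := X) l₀ ts).length = m₂' by omega]
      exact hm₂
    have hm₁G : m₁ < G.length := by
      have : G.length = (GlueAux.pairG (X := X) l₀ ts).length
          + (GlueAux.pairG (X := X) l₀ ts).length := by rw [hGsplit]; simp
      omega
    have hm₂G : (GlueAux.pairG (X := X) l₀ ts).length + m₂' < G.length := by
      have : G.length = (GlueAux.pairG (X := X) l₀ ts).length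
          + (GlueAux.pairG (X := X) l₀ ts).length := by rw [hGsplit]; simp
      omega
    have step1 : hbBase κ i (σ₁.length + R.length + m₁) :=
      ⟨by omega, by omega, σ₁[i]'hi, ⟨(σ₁[i]'hi).thread, Op.acq l₀⟩, hei,
        by rw [hκG m₁ hm₁G]; exact hGm₁, Or.inl rfl⟩
    have step3 : hbBase κ
        (σ₁.length + R.length + ((GlueAux.pairG (X := X) l₀ ts).length + m₂')) jj :=
      ⟨by omega, hjκ, ⟨(κ[jj]'hjκ).thread, Op.acq l₀⟩, κ[jj]'hjκ,
        by rw [hκG _ hm₂G]; exact hGm₂, hej, Or.inl rfl⟩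
    exact Relation.TransGen.head step1
      (Relation.TransGen.tail (hchain _ m₁ (by omega) hm₂G) step3)
end

section
/- Let racy : ℕ → ℕ → Prop be monotone under interval containment on [0,n), and suppose there exist u pairwise disjoint intervals I_1 < I_2 < ... < I_u in [0,n) (listed left to right, with consecutive intervals separated by at least m ≥ 1 positions) such that each I_t is racy and has length less than s, where s ≤ W/2 and W ≤ n. If moreover 2 ≤ t ≤ u-1 implies I_t is at distance at least W from both endpoints of [0,n), then there are at least (W - s)·(u - 2)/(W/m + 1) distinct windows of length W in [0,n) that are racy. -/
/-- Core counting argument: given `u` pairwise disjoint racy intervals in `[0,n)`,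
listed left to right with consecutive intervals separated by at least `m ≥ 1`
positions, each of length less than `s ≤ W/2` (with `W ≤ n`), such that all but
possibly the first and last intervals lie at distance at least `W` from both
endpoints, there are at least `(W - s)·(u - 2)/(W/m + 1)` racy windows of length `W`. -/
theorem many_racy_windows (racy : ℕ → ℕ → Prop)
    (hmono : ∀ i' i j j', i' ≤ i → j ≤ j' → racy i j → racy i' j')
    (n u m s W : ℕ) (hm : 1 ≤ m) (hsW : 2 * s ≤ W) (hWn : W ≤ n)
    (a b : Fin u → ℕ)
    (hab : ∀ t, a t ≤ b t) (hbn : ∀ t, b t ≤ n)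
    (hsep : ∀ p q : Fin u, p < q → b p + m ≤ a q)
    (hracy : ∀ t, racy (a t) (b t))
    (hshort : ∀ t, b t - a t < s)
    (hfar : ∀ t : Fin u, 0 < t.val → t.val < u - 1 → W ≤ a t ∧ b t + W ≤ n) :
    ((W : ℝ) - s) * ((u : ℝ) - 2) / ((W : ℝ) / m + 1) ≤
      ({p : ℕ | p + W ≤ n ∧ racy p (p + W)}).ncard := by
  classical
  set S : Set ℕ := {p : ℕ | p + W ≤ n ∧ racy p (p + W)} with hS
  have hSfin : S.Finite := by
    apply Set.Finite.subset (Set.finite_Iic n)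
    intro p hp
    exact le_trans (Nat.le_add_right p W) hp.1
  have hdenpos : (0 : ℝ) < (W : ℝ) / m + 1 := by
    have : (0:ℝ) ≤ (W:ℝ)/m := by positivity
    linarith
  have hcard0 : (0:ℝ) ≤ (S.ncard : ℝ) := by positivity
  by_cases hu : u < 3
  · -- trivial case: numerator ≤ 0
    have h1 : ((u:ℝ) - 2) ≤ 0 := by
      have : (u:ℝ) ≤ 3 := by exact_mod_cast Nat.le_of_lt_succ (by omega)
      have : (u:ℝ) ≤ 2 := by exact_mod_cast (by omega : u ≤ 2)
      linarith
    have h2 : (0:ℝ) ≤ (W:ℝ) - s := by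
      have : (s:ℝ) ≤ W := by exact_mod_cast (by omega : s ≤ W)
      linarith
    have : ((W : ℝ) - s) * ((u : ℝ) - 2) ≤ 0 := mul_nonpos_of_nonneg_of_nonpos h2 h1
    calc ((W : ℝ) - s) * ((u : ℝ) - 2) / ((W : ℝ) / m + 1) ≤ 0 :=
          div_nonpos_of_nonpos_of_nonneg this hdenpos.le
      _ ≤ _ := hcard0
  push_neg at hu
  have hu3 : 3 ≤ u := hu
  -- middle indices
  set T : Finset (Fin u) := Finset.univ.filter (fun t => 0 < t.val ∧ t.val < u - 1) with hT
  have hTcard : T.card = u - 2 := by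
    rw [hT]
    rw [Finset.card_nbij' (i := fun t => t.val) (j := fun j => ⟨j % u, Nat.mod_lt _ (by omega)⟩)
      (s := Finset.univ.filter (fun t : Fin u => 0 < t.val ∧ t.val < u - 1))
      (t := Finset.Ioo 0 (u-1))]
    · simp [Nat.card_Ioo]; omega
    · intro t ht
      simp only [Finset.mem_coe, Finset.coe_filter, Set.mem_setOf_eq, Finset.mem_filter, Finset.mem_univ, true_and] at ht
      simp [Finset.mem_Ioo, ht.1, ht.2]
    · intro j hj
      simp only [Finset.coe_Ioo, Set.mem_Ioo, Finset.mem_coe, Finset.mem_Ioo] at hj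
      have : j % u = j := Nat.mod_eq_of_lt (by omega)
      simp [this, hj.1, hj.2]
    · intro t ht
      simp only [Finset.mem_coe, Finset.coe_filter, Set.mem_setOf_eq, Finset.mem_filter, Finset.mem_univ, true_and] at ht
      ext
      simp [Nat.mod_eq_of_lt t.isLt]
    · intro j hj
      simp only [Finset.coe_Ioo, Set.mem_Ioo, Finset.mem_coe, Finset.mem_Ioo] at hj
      simp [Nat.mod_eq_of_lt (by omega : j < u)]
  -- the windows covering interval t
  set Wnd : Fin u → Finset ℕ := fun t => Finset.Icc (b t - W) (a t) with hWnd
  set U : Finset ℕ := T.biUnion Wnd with hU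
  -- U ⊆ S
  have hUS : ∀ p ∈ U, p ∈ S := by
    intro p hp
    simp only [hU, Finset.mem_biUnion] at hp
    obtain ⟨t, htT, hpt⟩ := hp
    simp only [hT, Finset.mem_filter, Finset.mem_univ, true_and] at htT
    obtain ⟨hWa, hbWn⟩ := hfar t htT.1 htT.2
    simp only [hWnd, Finset.mem_Icc] at hpt
    have hbpW : b t ≤ p + W := by omega
    have hat := hab t
    constructor
    · omega
    · exact hmono p (a t) (b t) (p + W) hpt.2 hbpW (hracy t)
  -- double counting
  have hdc : T.card * (W - s + 1) ≤ U.card * (W / m + 1) := by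
    apply Finset.card_mul_le_card_mul (fun t p => p ∈ Wnd t)
    · intro t ht
      have hsub : Wnd t ⊆ U := Finset.subset_biUnion_of_mem Wnd ht
      have : (Finset.bipartiteAbove (fun t p => p ∈ Wnd t) U t) = Wnd t := by
        ext p
        simp only [Finset.bipartiteAbove, Finset.mem_filter]
        exact ⟨fun h => h.2, fun h => ⟨hsub h, h⟩⟩
      rw [this]
      simp only [hT, Finset.mem_filter, Finset.mem_univ, true_and] at ht
      obtain ⟨hWa, hbWn⟩ := hfar t ht.1 ht.2
      have hab' := hab t
      have hsh := hshort t
      simp only [hWnd, Nat.card_Icc]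
      omega
    · intro p hp
      have : (Finset.bipartiteBelow (fun t p => p ∈ Wnd t) T p).card ≤
          (Finset.range (W / m + 1)).card := by
        apply Finset.card_le_card_of_injOn (fun t => (a t - p) / m)
        · intro t ht
          simp only [Finset.mem_coe, Finset.bipartiteBelow, Finset.mem_filter, hWnd, Finset.mem_Icc] at ht
          have h1 : a t - p ≤ W := by
            have := hab t
            omega
          simp only [Finset.mem_coe, Finset.mem_range]
          have := Nat.div_le_div_right (c := m) h1
          omega
        · intro t ht t' ht' heq
          simp only [Finset.coe_filter, Finset.bipartiteBelow, Set.mem_setOf_eq, hWnd,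
            Finset.mem_Icc] at ht ht'
          have hpt1 := ht.2.1
          have hpt2 := ht.2.2
          have hpt1' := ht'.2.1
          have hpt2' := ht'.2.2
          have hh := hab t
          have hh' := hab t'
          have heq' : (a t - p) / m = (a t' - p) / m := heq
          by_contra hne
          rcases lt_or_gt_of_ne hne with h | h
          · have hsep' := hsep t t' h
            have h1 : a t - p + m ≤ a t' - p := by
              have := hab t; omega
            have h2 : (a t - p) / m + 1 ≤ (a t' - p) / m := by
              have := Nat.div_le_div_right (c := m) h1
              rwa [Nat.add_div_right _ (by omega : 0 < m)] at this
            omega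
          · have hsep' := hsep t' t h
            have h1 : a t' - p + m ≤ a t - p := by
              have := hab t'; omega
            have h2 : (a t' - p) / m + 1 ≤ (a t - p) / m := by
              have := Nat.div_le_div_right (c := m) h1
              rwa [Nat.add_div_right _ (by omega : 0 < m)] at this
            omega
      simpa using this
  -- relate U.card to S.ncard
  have hUScard : (U.card : ℝ) ≤ (S.ncard : ℝ) := by
    have : (↑U : Set ℕ) ⊆ S := fun p hp => hUS p (by simpa using hp)
    have h := Set.ncard_le_ncard this hSfin
    rw [Set.ncard_coe_finset] at h
    exact_mod_cast h
  -- now the real arithmetic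
  rw [div_le_iff₀ hdenpos]
  have hcast : ((u:ℝ) - 2) * ((W:ℝ) - s + 1) ≤ (U.card : ℝ) * ((W / m : ℕ) + 1) := by
    have := hdc
    rw [hTcard] at this
    have h2 : ((u - 2 : ℕ) : ℝ) * ((W - s + 1 : ℕ) : ℝ) ≤ (U.card : ℝ) * ((W / m + 1 : ℕ) : ℝ) := by
      exact_mod_cast this
    have e1 : ((u - 2 : ℕ) : ℝ) = (u:ℝ) - 2 := by
      have : (2:ℕ) ≤ u := by omega
      push_cast [Nat.cast_sub this]
      ring
    have e2 : ((W - s + 1 : ℕ) : ℝ) = (W:ℝ) - s + 1 := by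
      have : s ≤ W := by omega
      push_cast [Nat.cast_sub this]
      ring
    rw [e1, e2] at h2
    push_cast at h2 ⊢
    linarith
  have hdivle : ((W / m : ℕ) : ℝ) ≤ (W:ℝ) / m := Nat.cast_div_le
  have hu2 : (0:ℝ) ≤ (u:ℝ) - 2 := by
    have : (3:ℝ) ≤ u := by exact_mod_cast hu3
    linarith
  have hUnn : (0:ℝ) ≤ (U.card : ℝ) := by positivity
  calc ((W : ℝ) - s) * ((u : ℝ) - 2) ≤ ((u:ℝ) - 2) * ((W:ℝ) - s + 1) := by nlinarith
    _ ≤ (U.card : ℝ) * (((W / m : ℕ) : ℝ) + 1) := by push_cast at hcast ⊢; linarith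
    _ ≤ (U.card : ℝ) * ((W:ℝ)/m + 1) := by nlinarith
    _ ≤ (S.ncard : ℝ) * ((W:ℝ)/m + 1) := by nlinarith
end
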